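/- arXiv:1912.03943 — 3 statements merged into one kernel-verified Lean document; each statement's English description precedes it below -/
import Mathlib

section
/- Let A be a ℤ₂-graded associative conformal algebra and let B be a parity-graded H-submodule of A that generates A and is closed under the commutator λ-bracket, i.e., [a_λ b] = (a_λ b) − (−1)^{|a||b|}(b_{−∂−λ} a) satisfies [B_λ B] ⊆ B[λ]. Define the filtration A₁ = B and A_{n+1} = the H-submodule generated by all λ-coefficients of polynomials (b_λ u) with b ∈ B, u ∈ A_n. Then for all n, m ≥ 1: (A_n _λ A_m) ⊆ A_{n+m}[λ] and [A_n _λ A_m] ⊆ A_{n+m−1}[λ]. -/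
open Finsupp

noncomputable section

variable (k : Type) [Field k] [CharZero k]

section Base

variable {M N : Type} [AddCommGroup M] [Module k M] [AddCommGroup N] [Module k N]

/-- Multiplication by `λ` on `M[λ] := ℕ →₀ M`. -/
def lamMul : (ℕ →₀ M) →ₗ[k] (ℕ →₀ M) := Finsupp.lmapDomain M k Nat.succ

/-- Apply a linear map to every coefficient of a polynomial. -/
def cw (f : M →ₗ[k] N) : (ℕ →₀ M) →ₗ[k] (ℕ →₀ N) := Finsupp.mapRange.linearMap f

/-- The constant-polynomial embedding `M → M[λ]`. -/
def cst : M →ₗ[k] (ℕ →₀ M) := Finsupp.lsingle 0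

/-- Multiplication by `λ` on `M[λ,μ] := ℕ →₀ (ℕ →₀ M)` (outer variable `μ`, inner `λ`). -/
def lamMul2 : (ℕ →₀ (ℕ →₀ M)) →ₗ[k] (ℕ →₀ (ℕ →₀ M)) := cw k (lamMul k)

/-- Multiplication by `μ` on `M[λ,μ]`. -/
def muMul2 : (ℕ →₀ (ℕ →₀ M)) →ₗ[k] (ℕ →₀ (ℕ →₀ M)) := Finsupp.lmapDomain (ℕ →₀ M) k Nat.succ

/-- The constant embedding `M → M[λ,μ]`. -/
def cst2 : M →ₗ[k] (ℕ →₀ (ℕ →₀ M)) := (cst k).comp (cst k)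

/-- Interchange of the two variables of `M[λ,μ]`. -/
def swapVar : (ℕ →₀ (ℕ →₀ M)) →ₗ[k] (ℕ →₀ (ℕ →₀ M)) :=
  Finsupp.lsum k fun n => cw k (Finsupp.lsingle n)

/-- The substitution `λ ↦ -∂-λ` on `M[λ]`, where `∂` acts on `M` via `D`. -/
def substNeg (D : M →ₗ[k] M) : (ℕ →₀ M) →ₗ[k] (ℕ →₀ M) :=
  Finsupp.lsum k fun n => ((-(cw k D) - lamMul k) ^ n) ∘ₗ cst k

/-- The substitution `ν ↦ λ+μ` from `M[ν]` to `M[λ,μ]`. -/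
def substAdd : (ℕ →₀ M) →ₗ[k] (ℕ →₀ (ℕ →₀ M)) :=
  Finsupp.lsum k fun n => ((lamMul2 k + muMul2 k) ^ n) ∘ₗ cst2 k

end Base
section Ops

variable {A B C V W L P : Type} [AddCommGroup A] [Module k A] [AddCommGroup B] [Module k B]
  [AddCommGroup C] [Module k C] [AddCommGroup V] [Module k V] [AddCommGroup W] [Module k W]
  [AddCommGroup L] [Module k L] [AddCommGroup P] [Module k P]

/-- `P_λ(a, Q_μ(b, c))`, an element of `W[λ,μ]` (outer variable `μ`, inner `λ`). -/
def opComp (F : A →ₗ[k] C →ₗ[k] (ℕ →₀ W)) (G : B →ₗ[k] V →ₗ[k] (ℕ →₀ C))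
    (a : A) (b : B) (c : V) : ℕ →₀ (ℕ →₀ W) := cw k (F a) (G b c)

/-- `Q_μ(b, P_λ(a, c))`, an element of `W[λ,μ]` (outer variable `μ`, inner `λ`). -/
def opCompSwap (F : B →ₗ[k] C →ₗ[k] (ℕ →₀ W)) (G : A →ₗ[k] V →ₗ[k] (ℕ →₀ C))
    (b : B) (a : A) (c : V) : ℕ →₀ (ℕ →₀ W) := swapVar k (cw k (F b) (G a c))

/-- `Q_{λ+μ}(P_λ(a, b), c)`, an element of `W[λ,μ]` (outer variable `μ`, inner `λ`). -/
def opSubst (F : A →ₗ[k] B →ₗ[k] (ℕ →₀ C)) (G : C →ₗ[k] V →ₗ[k] (ℕ →₀ W))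
    (a : A) (b : B) (c : V) : ℕ →₀ (ℕ →₀ W) :=
  Finsupp.lsum k (fun n => ((lamMul2 k (M := W)) ^ n) ∘ₗ substAdd k) (cw k (G.flip c) (F a b))

end Ops

/-- The Koszul sign `(-1)^{|a||b|}` attached to parities `i`, `j`. -/
def sgn (i j : ZMod 2) : ℤ := if i = 1 ∧ j = 1 then -1 else 1

section Structures

variable {A B C L V P : Type} [AddCommGroup A] [Module k A] [AddCommGroup B] [Module k B]
  [AddCommGroup C] [Module k C]
  [AddCommGroup L] [Module k L] [AddCommGroup V] [Module k V] [AddCommGroup P] [Module k P]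

/-- A `ℤ₂`-graded module over `H = k[∂]`, where `∂` acts via `D`:
the two graded components are complementary and `∂`-invariant. -/
structure IsGradedHMod (D : L →ₗ[k] L) (par : ZMod 2 → Submodule k L) : Prop where
  sup_eq_top : par 0 ⊔ par 1 = ⊤
  inf_eq_bot : par 0 ⊓ par 1 = ⊥
  map_d : ∀ i a, a ∈ par i → D a ∈ par i

/-- Sesqui-linearity of a pairing `A ⊗ B → C[λ]` with respect to the `∂`-actions
`DA`, `DB`, `DC`: `F(∂a, b) = -λ F(a,b)` and `F(a, ∂b) = (∂+λ) F(a,b)`. -/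
structure IsSesqui (DA : A →ₗ[k] A) (DB : B →ₗ[k] B) (DC : C →ₗ[k] C)
    (F : A →ₗ[k] B →ₗ[k] (ℕ →₀ C)) : Prop where
  dleft : ∀ a b, F (DA a) b = -(lamMul k (F a b))
  dright : ∀ a b, F a (DB b) = cw k DC (F a b) + lamMul k (F a b)

/-- A Lie conformal superalgebra structure on the `H`-module `L` (with `∂` acting via `D`)
with `ℤ₂`-grading `par` and `λ`-bracket `Br`. -/
structure IsLieConfSuper (D : L →ₗ[k] L) (par : ZMod 2 → Submodule k L)
    (Br : L →ₗ[k] L →ₗ[k] (ℕ →₀ L)) : Prop where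
  graded : IsGradedHMod k D par
  sesqui : IsSesqui k D D D Br
  parity : ∀ i j a b, a ∈ par i → b ∈ par j → ∀ n, Br a b n ∈ par (i + j)
  skew : ∀ i j a b, a ∈ par i → b ∈ par j → Br a b = -(sgn i j • substNeg k D (Br b a))
  jacobi : ∀ i j a b c, a ∈ par i → b ∈ par j →
    opComp k Br Br a b c = opSubst k Br Br a b c + sgn i j • opCompSwap k Br Br b a c

/-- A Poisson conformal superalgebra structure on the `H`-module `P`, with `λ`-bracket `Br`
and conformally associative, supercommutative product `Ml`, linked by the conformal
Leibniz rule. -/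
structure IsPoissonConfSuper (D : P →ₗ[k] P) (par : ZMod 2 → Submodule k P)
    (Br Ml : P →ₗ[k] P →ₗ[k] (ℕ →₀ P)) : Prop where
  lie : IsLieConfSuper k D par Br
  mul_sesqui : IsSesqui k D D D Ml
  mul_parity : ∀ i j a b, a ∈ par i → b ∈ par j → ∀ n, Ml a b n ∈ par (i + j)
  assoc : ∀ a b c, opComp k Ml Ml a b c = opSubst k Ml Ml a b c
  comm : ∀ i j a b, a ∈ par i → b ∈ par j → Ml a b = sgn i j • substNeg k D (Ml b a)
  leibniz : ∀ i j a b c, a ∈ par i → b ∈ par j →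
    opComp k Br Ml a b c = opSubst k Br Ml a b c + sgn i j • opCompSwap k Ml Br b a c

/-- A conformal representation of the Lie conformal superalgebra `(L, D, par, Br)` on the
`ℤ₂`-graded `H`-module `(V, DV, parV)`. -/
structure IsConfRep (D : L →ₗ[k] L) (par : ZMod 2 → Submodule k L)
    (Br : L →ₗ[k] L →ₗ[k] (ℕ →₀ L)) (DV : V →ₗ[k] V) (parV : ZMod 2 → Submodule k V)
    (ρ : L →ₗ[k] V →ₗ[k] (ℕ →₀ V)) : Prop where
  sesqui : IsSesqui k D DV DV ρ
  parity : ∀ i j a x, a ∈ par i → x ∈ parV j → ∀ n, ρ a x n ∈ parV (i + j)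
  jacobi : ∀ i j a b x, a ∈ par i → b ∈ par j →
    opComp k ρ ρ a b x - sgn i j • opCompSwap k ρ ρ b a x = opSubst k Br ρ a b x

/-- Finiteness of an `H`-module: it is generated, as a `k[∂]`-module, by finitely
many elements. -/
def IsHFinite (DV : V →ₗ[k] V) : Prop :=
  ∃ s : Finset V, ∀ W : Submodule k V, (∀ x ∈ W, DV x ∈ W) → (↑s : Set V) ⊆ ↑W → W = ⊤

/-- The Lie conformal superalgebra `(L, D, par, Br)` admits a finite faithful conformal
representation. -/
def HasFFR (D : L →ₗ[k] L) (par : ZMod 2 → Submodule k L)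
    (Br : L →ₗ[k] L →ₗ[k] (ℕ →₀ L)) : Prop :=
  ∃ (V : Type) (_ : AddCommGroup V) (_ : Module k V) (DV : V →ₗ[k] V)
    (parV : ZMod 2 → Submodule k V) (ρ : L →ₗ[k] V →ₗ[k] (ℕ →₀ V)),
    IsGradedHMod k DV parV ∧ IsConfRep k D par Br DV parV ρ ∧ IsHFinite k DV ∧
      ∀ a : L, a ≠ 0 → ρ a ≠ 0

/-- `ρ` (defined on the ambient space `P`) restricts to a conformal representation of the
Lie conformal subalgebra `L ≤ P` (with ambient `λ`-bracket `Br`) on `(V, DV, parV)`. -/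
def IsConfRepOn (D : P →ₗ[k] P) (par : ZMod 2 → Submodule k P)
    (Br : P →ₗ[k] P →ₗ[k] (ℕ →₀ P)) (L : Submodule k P)
    (DV : V →ₗ[k] V) (parV : ZMod 2 → Submodule k V)
    (ρ : P →ₗ[k] V →ₗ[k] (ℕ →₀ V)) : Prop :=
  (∀ a ∈ L, ∀ x, ρ (D a) x = -(lamMul k (ρ a x))) ∧
  (∀ a ∈ L, ∀ x, ρ a (DV x) = cw k DV (ρ a x) + lamMul k (ρ a x)) ∧
  (∀ i j, ∀ a ∈ L ⊓ par i, ∀ x ∈ parV j, ∀ n, ρ a x n ∈ parV (i + j)) ∧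
  (∀ i j, ∀ a ∈ L ⊓ par i, ∀ b ∈ L ⊓ par j, ∀ x,
    opComp k ρ ρ a b x - sgn i j • opCompSwap k ρ ρ b a x = opSubst k Br ρ a b x)

end Structures
section Extension

variable {A B W V : Type} [AddCommGroup A] [Module k A] [AddCommGroup B] [Module k B]
  [AddCommGroup W] [Module k W] [AddCommGroup V] [Module k V]

/-- The sesqui-linear extension of a pairing `F : A ⊗ B → W[λ]` to a pairing
`(H ⊗ A) ⊗ (H ⊗ B) → W[λ]` (where `H ⊗ A` is realized as `ℕ →₀ A`, the index recording
the power of `∂`): `F(∂^n a, ∂^m b) = (-λ)^n (∂+λ)^m F(a, b)`, where `∂` acts on `W[λ]`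
coefficientwise via `DW`. -/
def extSesqui (DW : W →ₗ[k] W) (F : A →ₗ[k] B →ₗ[k] (ℕ →₀ W)) :
    (ℕ →₀ A) →ₗ[k] (ℕ →₀ B) →ₗ[k] (ℕ →₀ W) :=
  Finsupp.lsum k fun n =>
    (Finsupp.lsum (R := k) k).toLinearMap.comp <| LinearMap.pi fun m =>
      (LinearMap.llcomp k B (ℕ →₀ W) (ℕ →₀ W)
        (((-(lamMul k (M := W))) ^ n) * ((cw k DW + lamMul k) ^ m))).comp F

/-- The action of `∂` on `H ⊗ V`, realized as `ℕ →₀ V`. -/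
def DD (V : Type) [AddCommGroup V] [Module k V] : (ℕ →₀ V) →ₗ[k] (ℕ →₀ V) :=
  Finsupp.lmapDomain V k Nat.succ

/-- The canonical embedding `V → H ⊗ V`. -/
def emb (V : Type) [AddCommGroup V] [Module k V] : V →ₗ[k] (ℕ →₀ V) :=
  Finsupp.lsingle 0

/-- A grading of `V` lifts coefficientwise to a grading of `H ⊗ V = ℕ →₀ V`. -/
def liftPar {V : Type} [AddCommGroup V] [Module k V] (par : ZMod 2 → Submodule k V)
    (i : ZMod 2) : Submodule k (ℕ →₀ V) where
  carrier := { f | ∀ n, f n ∈ par i }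
  add_mem' := fun hf hg n => by
    simpa only [Finsupp.add_apply] using add_mem (hf n) (hg n)
  zero_mem' := fun n => by simp
  smul_mem' := fun c f hf n => by
    simpa only [Finsupp.smul_apply] using Submodule.smul_mem _ c (hf n)

end Extension

section Super

variable (p : Type) [NonUnitalRing p] [Module k p] [SMulCommClass k p p] [IsScalarTower k p p]

/-- An (ordinary) Poisson superalgebra structure on the `ℤ₂`-graded associative
supercommutative algebra `p`, with super Lie bracket `br`. -/
structure IsPoissonSuper (par : ZMod 2 → Submodule k p) (br : p →ₗ[k] p →ₗ[k] p) : Prop where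
  sup_eq_top : par 0 ⊔ par 1 = ⊤
  inf_eq_bot : par 0 ⊓ par 1 = ⊥
  mul_mem : ∀ i j (a b : p), a ∈ par i → b ∈ par j → a * b ∈ par (i + j)
  mul_scomm : ∀ i j (a b : p), a ∈ par i → b ∈ par j → a * b = sgn i j • (b * a)
  br_mem : ∀ i j a b, a ∈ par i → b ∈ par j → br a b ∈ par (i + j)
  br_skew : ∀ i j a b, a ∈ par i → b ∈ par j → br a b = -(sgn i j • br b a)
  br_jacobi : ∀ i j a b c, a ∈ par i → b ∈ par j →
    br a (br b c) = br (br a b) c + sgn i j • br b (br a c)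
  leibniz : ∀ i j a b c, a ∈ par i → b ∈ par j →
    br a (b * c) = br a b * c + sgn i j • (b * br a c)

/-- An even derivation of the Poisson superalgebra `(p, par, br)`. -/
structure IsEvenDerivation (par : ZMod 2 → Submodule k p) (br : p →ₗ[k] p →ₗ[k] p)
    (d : p →ₗ[k] p) : Prop where
  even : ∀ i a, a ∈ par i → d a ∈ par i
  map_mul : ∀ a b, d (a * b) = d a * b + a * d b
  map_br : ∀ a b, d (br a b) = br (d a) b + br a (d b)

/-- Base pairing `a ⊗ b ↦ a b` (constant in `λ`) for the current/quadratic constructions. -/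
def curMul0 : p →ₗ[k] p →ₗ[k] (ℕ →₀ (ℕ →₀ p)) :=
  (LinearMap.mul k p).compr₂ ((cst k).comp (emb k p))

/-- Base pairing `a ⊗ b ↦ {a, b}` (constant in `λ`) for the current construction. -/
def curBr0 (br : p →ₗ[k] p →ₗ[k] p) : p →ₗ[k] p →ₗ[k] (ℕ →₀ (ℕ →₀ p)) :=
  br.compr₂ ((cst k).comp (emb k p))

/-- Base pairing `a ⊗ b ↦ {a, b} + ∂ (d a · b) + λ d(a b)` of the Poisson conformal
superalgebra `L(p, d)`. -/
def qua0 (br : p →ₗ[k] p →ₗ[k] p) (d : p →ₗ[k] p) : p →ₗ[k] p →ₗ[k] (ℕ →₀ (ℕ →₀ p)) :=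
  br.compr₂ ((cst k).comp (emb k p))
    + ((LinearMap.mul k p).comp d).compr₂ ((cst k).comp ((DD k p).comp (emb k p)))
    + ((LinearMap.mul k p).compr₂ d).compr₂ ((lamMul k).comp ((cst k).comp (emb k p)))

/-- The multiplication `(a ∂^n)_λ (b ∂^m) = (-λ)^n (∂+λ)^m (a b)` on `H ⊗ p`. -/
def LpdMul : (ℕ →₀ p) →ₗ[k] (ℕ →₀ p) →ₗ[k] (ℕ →₀ (ℕ →₀ p)) :=
  extSesqui k (DD k p) (curMul0 k p)

/-- The `λ`-bracket of the current Poisson conformal superalgebra `Cur p`. -/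
def CurBr (br : p →ₗ[k] p →ₗ[k] p) : (ℕ →₀ p) →ₗ[k] (ℕ →₀ p) →ₗ[k] (ℕ →₀ (ℕ →₀ p)) :=
  extSesqui k (DD k p) (curBr0 k p br)

/-- The `λ`-bracket of the Poisson conformal superalgebra `L(p, d)`. -/
def LpdBr (br : p →ₗ[k] p →ₗ[k] p) (d : p →ₗ[k] p) :
    (ℕ →₀ p) →ₗ[k] (ℕ →₀ p) →ₗ[k] (ℕ →₀ (ℕ →₀ p)) :=
  extSesqui k (DD k p) (qua0 k p br d)

/-- The twisted action `ρ̂_λ(a, u) = [a_λ u] + λ (a_λ u)` on `L(p, d)`. -/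
def LpdRho (br : p →ₗ[k] p →ₗ[k] p) (d : p →ₗ[k] p) :
    (ℕ →₀ p) →ₗ[k] (ℕ →₀ p) →ₗ[k] (ℕ →₀ (ℕ →₀ p)) :=
  LpdBr k p br d + (LpdMul k p).compr₂ (lamMul k)

end Super

/-- The `H = k[∂]`-submodule generated by a set `S` (where `∂` acts via `D`). -/
def hSpan {A : Type} [AddCommGroup A] [Module k A] (D : A →ₗ[k] A) (S : Set A) :
    Submodule k A :=
  Submodule.span k (⋃ n : ℕ, (D ^ n) '' S)

/-- The filtration of an associative conformal envelope: `A₀ = 0`, `A₁ = B`, and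
`A_{n+1}` is the `H`-submodule generated by all `λ`-coefficients of `(b_λ u)`,
`b ∈ B`, `u ∈ A_n`. -/
def filt {A : Type} [AddCommGroup A] [Module k A] (D : A →ₗ[k] A)
    (Ml : A →ₗ[k] A →ₗ[k] (ℕ →₀ A)) (B : Submodule k A) : ℕ → Submodule k A
  | 0 => ⊥
  | 1 => B
  | n + 2 => hSpan k D {x | ∃ b ∈ B, ∃ u ∈ filt D Ml B (n + 1), ∃ j, Ml b u j = x}


end

/-!
Both inclusions come from conformal associativity. For the product, `A_{n+1}` is spanned over
`H` by the coefficients of `(c_λ u)` with `c ∈ B`, `u ∈ A_n`, and associativity identifies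
`((c_λ u)_{λ+μ} b)` with `(c_λ (u_μ b))`, whose coefficients lie in `A_{n+m+1}` by induction
on `n`; the substitution `μ ↦ μ - λ` then recovers the individual coefficients of
`((c_λ u)_j {}_μ b)`.
For the commutator, associativity yields the Leibniz rule
`[a_λ (c_μ u)] = ([a_λ c]_{λ+μ} u) + (-1)^{|a||c|} (c_μ [a_λ u])`,
which lowers the second filtration index by one at the cost of a bracket with `B`, and
skew-symmetry of the bracket moves an index `1` from one side to the other. Because the sign
depends on parities, this needs every `A_n` to be a graded submodule, which again follows by
induction.
-/

variable (k : Type) [Field k]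

noncomputable section Operators

variable {M N P V W : Type} [AddCommGroup M] [Module k M] [AddCommGroup N] [Module k N]
  [AddCommGroup P] [Module k P] [AddCommGroup V] [Module k V] [AddCommGroup W] [Module k W]

def negDSubLam (D : M →ₗ[k] M) : (ℕ →₀ M) →ₗ[k] (ℕ →₀ M) := -(cw k D) - lamMul k

def lamAddMu : (ℕ →₀ (ℕ →₀ M)) →ₗ[k] (ℕ →₀ (ℕ →₀ M)) := lamMul2 k + muMul2 k

def muSubLam : (ℕ →₀ (ℕ →₀ M)) →ₗ[k] (ℕ →₀ (ℕ →₀ M)) := muMul2 k - lamMul2 k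

def negDSubLamSubMu (D : M →ₗ[k] M) : (ℕ →₀ (ℕ →₀ M)) →ₗ[k] (ℕ →₀ (ℕ →₀ M)) :=
  -(cw k (cw k D)) - lamMul2 k - muMul2 k

/-- `single n g ↦ λ^n g(λ + μ)`: the substitution through which `opSubst` is defined. -/
def substSum : (ℕ →₀ (ℕ →₀ M)) →ₗ[k] (ℕ →₀ (ℕ →₀ M)) :=
  Finsupp.lsum k fun n => ((lamMul2 k) ^ n) ∘ₗ substAdd k

/-- `single p g ↦ (μ - λ)^p g(λ)`. -/
def substDiff : (ℕ →₀ (ℕ →₀ M)) →ₗ[k] (ℕ →₀ (ℕ →₀ M)) :=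
  Finsupp.lsum k fun p => ((muSubLam k) ^ p) ∘ₗ Finsupp.lsingle 0

/-- `single p g ↦ (-∂-λ-μ)^p g(μ)`. -/
def substSkew (D : M →ₗ[k] M) : (ℕ →₀ (ℕ →₀ M)) →ₗ[k] (ℕ →₀ (ℕ →₀ M)) :=
  Finsupp.lsum k fun p => ((negDSubLamSubMu k D) ^ p) ∘ₗ cw k (cst k)

lemma cst_apply (x : M) : cst k x = single 0 x := rfl

lemma cst2_apply (x : M) : cst2 k x = single 0 (single 0 x) := rfl

lemma cw_single (f : M →ₗ[k] N) (n : ℕ) (x : M) : cw k f (single n x) = single n (f x) := by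
  simp [cw]

lemma cw_apply (f : M →ₗ[k] N) (g : ℕ →₀ M) (t : ℕ) : cw k f g t = f (g t) := by
  simp [cw, Finsupp.mapRange_apply]

lemma cw_comp (f : N →ₗ[k] P) (g : M →ₗ[k] N) : cw k f ∘ₗ cw k g = cw k (f ∘ₗ g) := by
  ext n x; simp [cw_single]

lemma cw_sub (f g : M →ₗ[k] N) : cw k (f - g) = cw k f - cw k g := by
  ext n x; simp [cw_single]

lemma cw_zsmul (s : ℤ) (f : M →ₗ[k] N) : cw k (s • f) = s • cw k f := by
  ext n x; simp [cw_single]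

lemma cw_pow (f : M →ₗ[k] M) (n : ℕ) : (cw k f) ^ n = cw k (f ^ n) := by
  induction n with
  | zero => ext p x; simp [cw_single]
  | succ n ih =>
    rw [pow_succ, pow_succ, ih, Module.End.mul_eq_comp, Module.End.mul_eq_comp, cw_comp]

lemma lmapDomain_succ_comp_cw (f : M →ₗ[k] N) :
    Finsupp.lmapDomain N k Nat.succ ∘ₗ cw k f = cw k f ∘ₗ Finsupp.lmapDomain M k Nat.succ := by
  ext n x; simp [cw_single]

lemma lmapDomain_succ_pow_single (p n : ℕ) (v : V) :
    ((Finsupp.lmapDomain V k Nat.succ) ^ p) (single n v) = single (n + p) v := by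
  induction p generalizing n with
  | zero => simp
  | succ p ih =>
      rw [pow_succ', Module.End.mul_apply, ih]
      simp only [Finsupp.lmapDomain_apply, Finsupp.mapDomain_single]
      rfl

lemma lamMul_single (n : ℕ) (x : M) : lamMul k (single n x) = single (n + 1) x := by
  simp [lamMul]

lemma lamMul_pow_single (p n : ℕ) (x : M) :
    ((lamMul k) ^ p) (single n x) = single (n + p) x := lmapDomain_succ_pow_single k p n x

lemma lamMul2_single (p : ℕ) (g : ℕ →₀ M) :
    lamMul2 k (single p g) = single p (lamMul k g) := by
  simp [lamMul2, cw_single]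

lemma muMul2_single (p : ℕ) (g : ℕ →₀ M) : muMul2 k (single p g) = single (p + 1) g := by
  simp [muMul2]

lemma swapVar_single (n : ℕ) (g : ℕ →₀ M) :
    swapVar k (single n g) = cw k (Finsupp.lsingle n) g := by
  simp [swapVar]

lemma swapVar_apply (h : ℕ →₀ (ℕ →₀ M)) (a b : ℕ) : swapVar k h a b = h b a := by
  induction h using Finsupp.induction_linear with
  | zero => simp
  | add f g hf hg => simp [hf, hg]
  | single n g =>
      rw [swapVar_single, cw_apply]
      rcases eq_or_ne n b with rfl | hnb
      · simp
      · simp [hnb]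

lemma substNeg_single (D : M →ₗ[k] M) (n : ℕ) (x : M) :
    substNeg k D (single n x) = ((negDSubLam k D) ^ n) (single 0 x) := by
  simp [substNeg, negDSubLam, cst]

lemma substAdd_single (n : ℕ) (x : M) :
    substAdd k (single n x) = ((lamAddMu k) ^ n) (cst2 k x) := by
  simp [substAdd, lamAddMu]

lemma substSum_single (n : ℕ) (g : ℕ →₀ M) :
    substSum k (single n g) = ((lamMul2 k (M := M)) ^ n) (substAdd k g) := by
  simp [substSum]

lemma substDiff_single (p : ℕ) (g : ℕ →₀ M) :
    substDiff k (single p g) = ((muSubLam k) ^ p) (single 0 g) := by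
  simp [substDiff]

lemma substSkew_single (D : M →ₗ[k] M) (p : ℕ) (g : ℕ →₀ M) :
    substSkew k D (single p g) = ((negDSubLamSubMu k D) ^ p) (cw k (cst k) g) := by
  simp [substSkew]

lemma negDSubLam_single (D : M →ₗ[k] M) (n : ℕ) (x : M) :
    negDSubLam k D (single n x) = -(single n (D x)) - single (n + 1) x := by
  simp [negDSubLam, cw_single, lamMul_single]

lemma negDSubLamSubMu_single (D : M →ₗ[k] M) (p : ℕ) (g : ℕ →₀ M) :
    negDSubLamSubMu k D (single p g) =
      -(single p (cw k D g)) - single p (lamMul k g) - single (p + 1) g := by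
  simp [negDSubLamSubMu, lamMul2_single, muMul2_single, cw_single]

/- Every substitution above has the form `Σ_n φ^n ∘ ι`; identities between them are checked
on monomials, after pushing powers of `φ` through an intertwining map by the next lemma. -/
lemma pow_comp_of_comp_eq (G : V →ₗ[k] W) {x : V →ₗ[k] V} {y : W →ₗ[k] W}
    (h : y ∘ₗ G = G ∘ₗ x) (p : ℕ) : (y ^ p) ∘ₗ G = G ∘ₗ (x ^ p) := by
  induction p with
  | zero => simp [Module.End.one_eq_id]
  | succ p ih =>
      rw [pow_succ, pow_succ, Module.End.mul_eq_comp, Module.End.mul_eq_comp,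
        LinearMap.comp_assoc, h, ← LinearMap.comp_assoc, ih, LinearMap.comp_assoc]

lemma pow_apply_of_comp_eq (G : V →ₗ[k] W) {x : V →ₗ[k] V} {y : W →ₗ[k] W}
    (h : y ∘ₗ G = G ∘ₗ x) (p : ℕ) (v : V) : (y ^ p) (G v) = G ((x ^ p) v) :=
  LinearMap.congr_fun (pow_comp_of_comp_eq k G h p) v


lemma substNeg_comp_lamMul (D : M →ₗ[k] M) :
    substNeg k D ∘ₗ lamMul k = negDSubLam k D ∘ₗ substNeg k D := by
  refine Finsupp.lhom_ext fun n x => ?_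
  simp only [LinearMap.comp_apply, lamMul_single, substNeg_single]
  rw [pow_succ', Module.End.mul_apply]

lemma negDSubLam_comp_cw (D : M →ₗ[k] M) :
    negDSubLam k D ∘ₗ cw k D = cw k D ∘ₗ negDSubLam k D := by
  refine Finsupp.lhom_ext fun n x => ?_
  simp [cw_single, negDSubLam, lamMul_single]

lemma substNeg_comp_cw (D : M →ₗ[k] M) :
    substNeg k D ∘ₗ cw k D = cw k D ∘ₗ substNeg k D := by
  refine Finsupp.lhom_ext fun n x => ?_
  simp only [LinearMap.comp_apply, cw_single, substNeg_single]
  rw [← cw_single k D 0 x]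
  exact pow_apply_of_comp_eq k (cw k D) (negDSubLam_comp_cw k D) n _

lemma substNeg_comp_negDSubLam (D : M →ₗ[k] M) :
    substNeg k D ∘ₗ negDSubLam k D = lamMul k ∘ₗ substNeg k D := by
  refine LinearMap.ext fun f => ?_
  have e1 := LinearMap.congr_fun (substNeg_comp_lamMul k D) f
  have e2 := LinearMap.congr_fun (substNeg_comp_cw k D) f
  simp only [negDSubLam, LinearMap.comp_apply, LinearMap.sub_apply, LinearMap.neg_apply,
    map_sub, map_neg] at e1 e2 ⊢
  rw [e1, e2]
  abel

lemma substNeg_substNeg (D : M →ₗ[k] M) (f : ℕ →₀ M) : substNeg k D (substNeg k D f) = f := by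
  suffices substNeg k D ∘ₗ substNeg k D = LinearMap.id from LinearMap.congr_fun this f
  refine Finsupp.lhom_ext fun n x => ?_
  simp only [LinearMap.comp_apply, LinearMap.id_apply, substNeg_single]
  rw [← pow_apply_of_comp_eq k (substNeg k D) (substNeg_comp_negDSubLam k D).symm,
    substNeg_single, pow_zero, Module.End.one_apply, lamMul_pow_single, zero_add]

lemma substAdd_comp_lamMul :
    substAdd k ∘ₗ lamMul k = lamAddMu k ∘ₗ (substAdd k (M := M)) := by
  refine Finsupp.lhom_ext fun n x => ?_
  simp only [LinearMap.comp_apply, lamMul_single, substAdd_single]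
  rw [pow_succ', Module.End.mul_apply]

lemma muMul2_comp_lamMul2 : muMul2 k ∘ₗ lamMul2 k = lamMul2 k ∘ₗ (muMul2 k (M := M)) :=
  lmapDomain_succ_comp_cw k (lamMul k)

lemma muSubLam_comp_lamMul2 :
    muSubLam k ∘ₗ lamMul2 k = lamMul2 k ∘ₗ (muSubLam k (M := M)) := by
  rw [muSubLam, LinearMap.sub_comp, LinearMap.comp_sub, muMul2_comp_lamMul2]

lemma substDiff_comp_lamMul2 : substDiff k ∘ₗ lamMul2 k = lamMul2 k ∘ₗ (substDiff k (M := M)) := by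
  refine Finsupp.lhom_ext fun n g => ?_
  simp only [LinearMap.comp_apply, lamMul2_single, substDiff_single]
  rw [← lamMul2_single]
  exact pow_apply_of_comp_eq k (lamMul2 k) (muSubLam_comp_lamMul2 k) n _

lemma substDiff_comp_muMul2 : substDiff k ∘ₗ muMul2 k = muSubLam k ∘ₗ (substDiff k (M := M)) := by
  refine Finsupp.lhom_ext fun n g => ?_
  simp only [LinearMap.comp_apply, muMul2_single, substDiff_single]
  rw [pow_succ', Module.End.mul_apply]

lemma substDiff_comp_lamAddMu :
    substDiff k ∘ₗ lamAddMu k = muMul2 k ∘ₗ (substDiff k (M := M)) := by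
  rw [lamAddMu, LinearMap.comp_add, substDiff_comp_lamMul2, substDiff_comp_muMul2,
    ← LinearMap.add_comp, muSubLam]
  congr 1
  abel

lemma substDiff_comp_substAdd : substDiff k ∘ₗ substAdd k = cw k (cst k (M := M)) := by
  refine Finsupp.lhom_ext fun n y => ?_
  simp only [LinearMap.comp_apply, substAdd_single]
  rw [← pow_apply_of_comp_eq k (substDiff k) (substDiff_comp_lamAddMu k (M := M)).symm, cst2_apply,
    substDiff_single, pow_zero, Module.End.one_apply, muMul2, lmapDomain_succ_pow_single,
    cw_single, cst_apply, zero_add]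

lemma lamMul2_pow_comp_cw_cst (n : ℕ) :
    ((lamMul2 k) ^ n) ∘ₗ cw k (cst k) = cw k (Finsupp.lsingle n (M := M) (R := k)) := by
  rw [lamMul2, cw_pow, cw_comp]
  congr 1
  ext y
  simp [cst_apply, lamMul_pow_single]

lemma substDiff_substSum (X : ℕ →₀ (ℕ →₀ M)) : substDiff k (substSum k X) = swapVar k X := by
  suffices substDiff k ∘ₗ substSum k = swapVar k (M := M) from LinearMap.congr_fun this X
  refine Finsupp.lhom_ext fun n g => ?_
  simp only [LinearMap.comp_apply, substSum_single, swapVar_single]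
  have e := LinearMap.congr_fun (substDiff_comp_substAdd k (M := M)) g
  have e' := LinearMap.congr_fun (lamMul2_pow_comp_cw_cst k (M := M) n) g
  simp only [LinearMap.comp_apply] at e e'
  rw [← pow_apply_of_comp_eq k (substDiff k) (substDiff_comp_lamMul2 k (M := M)).symm, e, e']

lemma negDSubLamSubMu_comp_muMul2 (D : M →ₗ[k] M) :
    negDSubLamSubMu k D ∘ₗ muMul2 k = muMul2 k ∘ₗ negDSubLamSubMu k D := by
  refine Finsupp.lhom_ext fun p g => ?_
  simp only [LinearMap.comp_apply, muMul2_single, negDSubLamSubMu_single, map_sub, map_neg]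

lemma substSkew_comp_lamMul2 (D : M →ₗ[k] M) :
    substSkew k D ∘ₗ lamMul2 k = muMul2 k ∘ₗ substSkew k D := by
  refine Finsupp.lhom_ext fun p g => ?_
  have e := LinearMap.congr_fun (lmapDomain_succ_comp_cw k (cst k (M := M))) g
  simp only [LinearMap.comp_apply] at e ⊢
  rw [lamMul2_single, substSkew_single, substSkew_single, lamMul, ← e]
  exact pow_apply_of_comp_eq k (muMul2 k) (negDSubLamSubMu_comp_muMul2 k D) p _

lemma substSkew_comp_muMul2 (D : M →ₗ[k] M) :
    substSkew k D ∘ₗ muMul2 k = negDSubLamSubMu k D ∘ₗ substSkew k D := by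
  refine Finsupp.lhom_ext fun p g => ?_
  simp only [LinearMap.comp_apply, muMul2_single, substSkew_single]
  rw [pow_succ', Module.End.mul_apply]

lemma substSkew_comp_lamAddMu (D : M →ₗ[k] M) :
    substSkew k D ∘ₗ lamAddMu k = cw k (negDSubLam k D) ∘ₗ substSkew k D := by
  rw [lamAddMu, LinearMap.comp_add, substSkew_comp_lamMul2, substSkew_comp_muMul2,
    ← LinearMap.add_comp]
  congr 1
  refine Finsupp.lhom_ext fun p g => ?_
  simp only [negDSubLamSubMu, negDSubLam, LinearMap.add_apply, LinearMap.sub_apply,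
    LinearMap.neg_apply, muMul2_single, lamMul2_single, cw_single]
  simp only [Finsupp.single_neg, Finsupp.single_sub]
  abel

lemma substSkew_comp_substAdd (D : M →ₗ[k] M) :
    substSkew k D ∘ₗ substAdd k = Finsupp.lsingle 0 ∘ₗ substNeg k D := by
  refine Finsupp.lhom_ext fun ν y => ?_
  have e0 : substSkew k D (cst2 k y) = cst2 k y := by
    rw [cst2_apply, substSkew_single, pow_zero, Module.End.one_apply, cw_single, cst_apply]
  simp only [LinearMap.comp_apply, substAdd_single]
  rw [← pow_apply_of_comp_eq k (substSkew k D) (substSkew_comp_lamAddMu k D).symm, e0,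
    cw_pow, cst2_apply, cw_single, substNeg_single]
  rfl

lemma substSkew_substSum (D : M →ₗ[k] M) (X : ℕ →₀ (ℕ →₀ M)) :
    substSkew k D (substSum k X) = cw k (substNeg k D) X := by
  suffices substSkew k D ∘ₗ substSum k = cw k (substNeg k D) from LinearMap.congr_fun this X
  refine Finsupp.lhom_ext fun n g => ?_
  have e := LinearMap.congr_fun (substSkew_comp_substAdd k D) g
  simp only [LinearMap.comp_apply, Finsupp.lsingle_apply] at e ⊢
  rw [substSum_single, cw_single,
    ← pow_apply_of_comp_eq k (substSkew k D) (substSkew_comp_lamMul2 k D).symm, e, muMul2,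
    lmapDomain_succ_pow_single, zero_add]

lemma cw_cw_comp_cw_lsingle (f : M →ₗ[k] M) (q : ℕ) :
    cw k (cw k f) ∘ₗ cw k (Finsupp.lsingle q) =
      cw k (Finsupp.lsingle q (M := M) (R := k)) ∘ₗ cw k f := by
  ext n x
  simp [cw_single]

lemma lamMul2_comp_cw_lsingle (q : ℕ) :
    lamMul2 k ∘ₗ cw k (Finsupp.lsingle q) = cw k (Finsupp.lsingle (q + 1) (M := M) (R := k)) := by
  ext n x
  simp [lamMul2, cw_single, lamMul_single]

lemma muMul2_comp_cw_lsingle (q : ℕ) :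
    muMul2 k ∘ₗ cw k (Finsupp.lsingle q) =
      cw k (Finsupp.lsingle q (M := M) (R := k)) ∘ₗ lamMul k :=
  lmapDomain_succ_comp_cw k (Finsupp.lsingle q)

lemma swapVar_comp_lamMul2 : swapVar k ∘ₗ lamMul2 k = muMul2 k ∘ₗ swapVar k (M := M) := by
  refine Finsupp.lhom_ext fun n g => ?_
  have e := LinearMap.congr_fun (muMul2_comp_cw_lsingle k (M := M) n) g
  simp only [LinearMap.comp_apply] at e ⊢
  rw [lamMul2_single, swapVar_single, swapVar_single, e]

lemma swapVar_comp_muMul2 : swapVar k ∘ₗ muMul2 k = lamMul2 k ∘ₗ swapVar k (M := M) := by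
  refine Finsupp.lhom_ext fun n g => ?_
  have e := LinearMap.congr_fun (lamMul2_comp_cw_lsingle k (M := M) n) g
  simp only [LinearMap.comp_apply] at e ⊢
  rw [muMul2_single, swapVar_single, swapVar_single, e]

lemma swapVar_comp_lamAddMu : swapVar k ∘ₗ lamAddMu k = lamAddMu k ∘ₗ swapVar k (M := M) := by
  rw [lamAddMu, LinearMap.comp_add, swapVar_comp_lamMul2, swapVar_comp_muMul2,
    ← LinearMap.add_comp, add_comm]

lemma swapVar_substAdd (f : ℕ →₀ M) : swapVar k (substAdd k f) = substAdd k f := by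
  suffices swapVar k ∘ₗ substAdd k = substAdd k (M := M) from LinearMap.congr_fun this f
  refine Finsupp.lhom_ext fun ν z => ?_
  simp only [LinearMap.comp_apply, substAdd_single]
  rw [← pow_apply_of_comp_eq k (swapVar k) (swapVar_comp_lamAddMu k (M := M)).symm, cst2_apply,
    swapVar_single, cw_single]
  rfl

section Sesquilinear

variable (D : M →ₗ[k] M) (F : M →ₗ[k] (ℕ →₀ M))

lemma negDSubLamSubMu_comp_swapVar_cw (hF : ∀ x, F (D x) = cw k D (F x) + lamMul k (F x)) :
    negDSubLamSubMu k D ∘ₗ (swapVar k ∘ₗ cw k F) = (swapVar k ∘ₗ cw k F) ∘ₗ negDSubLam k D := by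
  refine Finsupp.lhom_ext fun q x => ?_
  have e1 := LinearMap.congr_fun (cw_cw_comp_cw_lsingle k D q) (F x)
  have e2 := LinearMap.congr_fun (lamMul2_comp_cw_lsingle k (M := M) q) (F x)
  have e3 := LinearMap.congr_fun (muMul2_comp_cw_lsingle k (M := M) q) (F x)
  simp only [LinearMap.comp_apply] at e1 e2 e3
  simp only [LinearMap.comp_apply, negDSubLam_single, map_sub, map_neg, cw_single,
    swapVar_single, hF, map_add, negDSubLamSubMu, LinearMap.sub_apply, LinearMap.neg_apply,
    e1, e2, e3]
  abel

lemma substSkew_cw (hF : ∀ x, F (D x) = cw k D (F x) + lamMul k (F x)) (f : ℕ →₀ M) :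
    substSkew k D (cw k F f) = swapVar k (cw k F (substNeg k D f)) := by
  suffices substSkew k D ∘ₗ cw k F = swapVar k ∘ₗ cw k F ∘ₗ substNeg k D from
    LinearMap.congr_fun this f
  refine Finsupp.lhom_ext fun p y => ?_
  have h := LinearMap.congr_fun
    (pow_comp_of_comp_eq k (swapVar k ∘ₗ cw k F) (negDSubLamSubMu_comp_swapVar_cw k D F hF) p)
    (single 0 y)
  simp only [LinearMap.comp_apply, cw_single, substSkew_single, substNeg_single] at h ⊢
  rw [← h, swapVar_single]
  rfl

variable (G : M →ₗ[k] (ℕ →₀ M))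

lemma substSum_cw_comp_negDSubLam (hG : ∀ x, G (D x) = -(lamMul k (G x))) :
    (substSum k ∘ₗ cw k G) ∘ₗ negDSubLam k D = muMul2 k ∘ₗ (substSum k ∘ₗ cw k G) := by
  refine Finsupp.lhom_ext fun q x => ?_
  have e1 := LinearMap.congr_fun (substAdd_comp_lamMul k (M := M)) (G x)
  simp only [LinearMap.comp_apply] at e1
  simp only [LinearMap.comp_apply, negDSubLam_single, map_sub, map_neg, cw_single, hG,
    Finsupp.single_neg, substSum_single, e1, lamAddMu, LinearMap.add_apply, map_add]
  rw [pow_succ, Module.End.mul_apply,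
    pow_apply_of_comp_eq k (muMul2 k) (muMul2_comp_lamMul2 k (M := M)).symm]
  abel

lemma substSum_cw_substNeg (hG : ∀ x, G (D x) = -(lamMul k (G x))) (f : ℕ →₀ M) :
    substSum k (cw k G (substNeg k D f)) = swapVar k (substSum k (cw k G f)) := by
  suffices substSum k ∘ₗ cw k G ∘ₗ substNeg k D = swapVar k ∘ₗ (substSum k ∘ₗ cw k G) from
    LinearMap.congr_fun this f
  refine Finsupp.lhom_ext fun p y => ?_
  have h := LinearMap.congr_fun
    (pow_comp_of_comp_eq k (substSum k ∘ₗ cw k G) (substSum_cw_comp_negDSubLam k D G hG).symm p)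
    (single 0 y)
  simp only [LinearMap.comp_apply, substNeg_single, cw_single, substSum_single] at h ⊢
  rw [← h, pow_zero, Module.End.one_apply,
    ← pow_apply_of_comp_eq k (swapVar k) (swapVar_comp_lamMul2 k (M := M)).symm, swapVar_substAdd]

end Sesquilinear

def coeffSub (W : Submodule k M) : Submodule k (ℕ →₀ M) where
  carrier := {f | ∀ t, f t ∈ W}
  add_mem' hf hg t := by simpa using add_mem (hf t) (hg t)
  zero_mem' t := by simp
  smul_mem' c f hf t := by simpa using W.smul_mem c (hf t)

section Closure

variable {U : Submodule k V} {W : Submodule k M}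

lemma single_mem_coeffSub {v : V} (hv : v ∈ U) (n : ℕ) : single n v ∈ coeffSub k U := by
  intro t
  rw [Finsupp.single_apply]
  split_ifs
  · exact hv
  · exact U.zero_mem

lemma lsum_mem {U' : Submodule k N} (g : ℕ → V →ₗ[k] N) (f : ℕ →₀ V)
    (h : ∀ n, g n (f n) ∈ U') : Finsupp.lsum k g f ∈ U' := by
  rw [Finsupp.lsum_apply]
  exact U'.finsuppSum_mem k f _ fun n _ => h n

lemma lmapDomain_succ_mem_coeffSub {f : ℕ →₀ V} (h : f ∈ coeffSub k U) :
    Finsupp.lmapDomain V k Nat.succ f ∈ coeffSub k U := by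
  rintro (_ | t)
  · rw [Finsupp.lmapDomain_apply, Finsupp.mapDomain_of_notMem_range _ _ (by simp)]
    exact U.zero_mem
  · rw [Finsupp.lmapDomain_apply, Finsupp.mapDomain_apply Nat.succ_injective]
    exact h t

lemma cw_mem_coeffSub {U' : Submodule k N} {φ : M →ₗ[k] N} (hφ : ∀ x ∈ W, φ x ∈ U')
    {f : ℕ →₀ M} (h : f ∈ coeffSub k W) : cw k φ f ∈ coeffSub k U' := fun t => by
  rw [cw_apply]
  exact hφ _ (h t)

lemma lamMul_mem_coeffSub {f : ℕ →₀ M} (h : f ∈ coeffSub k W) : lamMul k f ∈ coeffSub k W :=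
  lmapDomain_succ_mem_coeffSub k h

lemma substNeg_mem_coeffSub {D : M →ₗ[k] M} (hD : ∀ x ∈ W, D x ∈ W) {f : ℕ →₀ M}
    (h : f ∈ coeffSub k W) : substNeg k D f ∈ coeffSub k W := by
  have hneg : ∀ g ∈ coeffSub k W, negDSubLam k D g ∈ coeffSub k W := fun g hg =>
    sub_mem (neg_mem (cw_mem_coeffSub k hD hg)) (lamMul_mem_coeffSub k hg)
  unfold substNeg
  apply lsum_mem
  intro n
  exact Module.End.pow_apply_mem_of_forall_mem n hneg _ (single_mem_coeffSub k (h n) 0)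

variable {X : ℕ →₀ (ℕ →₀ M)}

lemma lamMul2_mem_coeffSub (h : X ∈ coeffSub k (coeffSub k W)) :
    lamMul2 k X ∈ coeffSub k (coeffSub k W) :=
  cw_mem_coeffSub k (fun _ => lamMul_mem_coeffSub k) h

lemma muMul2_mem_coeffSub (h : X ∈ coeffSub k (coeffSub k W)) :
    muMul2 k X ∈ coeffSub k (coeffSub k W) :=
  lmapDomain_succ_mem_coeffSub k h

lemma substAdd_mem_coeffSub {f : ℕ →₀ M} (h : f ∈ coeffSub k W) :
    substAdd k f ∈ coeffSub k (coeffSub k W) := by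
  unfold substAdd
  apply lsum_mem
  intro n
  exact Module.End.pow_apply_mem_of_forall_mem n
    (fun _ hY => add_mem (lamMul2_mem_coeffSub k hY) (muMul2_mem_coeffSub k hY)) _
    (single_mem_coeffSub k (single_mem_coeffSub k (h n) 0) 0)

lemma substSum_mem_coeffSub (h : X ∈ coeffSub k (coeffSub k W)) :
    substSum k X ∈ coeffSub k (coeffSub k W) := by
  unfold substSum
  apply lsum_mem
  intro n
  exact Module.End.pow_apply_mem_of_forall_mem n (fun _ => lamMul2_mem_coeffSub k) _
    (substAdd_mem_coeffSub k (h n))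

lemma substDiff_mem_coeffSub (h : X ∈ coeffSub k (coeffSub k W)) :
    substDiff k X ∈ coeffSub k (coeffSub k W) := by
  unfold substDiff
  apply lsum_mem
  intro p
  exact Module.End.pow_apply_mem_of_forall_mem p
    (fun _ hY => sub_mem (muMul2_mem_coeffSub k hY) (lamMul2_mem_coeffSub k hY)) _
    (single_mem_coeffSub k (h p) 0)

lemma swapVar_mem_coeffSub (h : X ∈ coeffSub k (coeffSub k W)) :
    swapVar k X ∈ coeffSub k (coeffSub k W) := fun a b => by
  rw [swapVar_apply]
  exact h b a

lemma mem_coeffSub_of_substSum_mem (h : substSum k X ∈ coeffSub k (coeffSub k W)) :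
    X ∈ coeffSub k (coeffSub k W) := fun a b => by
  have hX := substDiff_mem_coeffSub k h
  rw [substDiff_substSum] at hX
  simpa only [swapVar_apply] using hX b a

end Closure

section Assoc

variable {D : M →ₗ[k] M} {Ml : M →ₗ[k] M →ₗ[k] (ℕ →₀ M)}

/-- `[a_λ b] = (a_λ b) - s (b_{-∂-λ} a)`, with `s` standing for the Koszul sign
`(-1)^{|a||b|}`. -/
def commBr (D : M →ₗ[k] M) (Ml : M →ₗ[k] M →ₗ[k] (ℕ →₀ M)) (s : ℤ) (a : M) :
    M →ₗ[k] (ℕ →₀ M) :=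
  Ml a - s • (substNeg k D ∘ₗ Ml.flip a)

lemma commBr_apply (s : ℤ) (a b : M) :
    commBr k D Ml s a b = Ml a b - s • substNeg k D (Ml b a) := by
  simp [commBr]

lemma commBr_map_D_right (hMl : IsSesqui k D D D Ml) (s : ℤ) (a c : M) :
    commBr k D Ml s a (D c) = cw k D (commBr k D Ml s a c) + lamMul k (commBr k D Ml s a c) := by
  have e := LinearMap.congr_fun (substNeg_comp_lamMul k D) (Ml c a)
  simp only [LinearMap.comp_apply, negDSubLam, LinearMap.sub_apply, LinearMap.neg_apply] at e
  rw [commBr_apply, commBr_apply, hMl.dright a c, hMl.dleft c a, map_neg, e]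
  simp only [map_sub, map_zsmul, sub_neg_eq_add, neg_sub, smul_add]
  abel

lemma commBr_skew {s : ℤ} (hs : s * s = 1) (a c : M) :
    commBr k D Ml s a c = -(s • substNeg k D (commBr k D Ml s c a)) := by
  rw [commBr_apply, commBr_apply, map_sub, map_zsmul, substNeg_substNeg, smul_sub, smul_smul, hs,
    one_smul, neg_sub]

variable (hassoc : ∀ a b c, opComp k Ml Ml a b c = opSubst k Ml Ml a b c)
include hassoc

lemma cw_mul_mul_eq_substSum (a b c : M) :
    cw k (Ml a) (Ml b c) = substSum k (cw k (Ml.flip c) (Ml a b)) :=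
  hassoc a b c

/-- The conformal Leibniz rule
`[a_λ (c_μ u)] = ([a_λ c]_{λ+μ} u) + s₁ (c_μ [a_λ u])` with `s₁ s₂ = (-1)^{|a|(|c|+|u|)}`. -/
lemma cw_commBr_mul (hMl : IsSesqui k D D D Ml) (s₁ s₂ : ℤ) (a c u : M) :
    cw k (commBr k D Ml (s₁ * s₂) a) (Ml c u)
      = substSum k (cw k (Ml.flip u) (commBr k D Ml s₁ a c))
        + s₁ • swapVar k (cw k (Ml c) (commBr k D Ml s₂ a u)) := by
  -- `((c_μ u)_{-∂-λ} a) = (c_μ (u_{-∂-λ-μ} a))`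
  have hswap : cw k (substNeg k D) (cw k (Ml.flip a) (Ml c u))
      = swapVar k (cw k (Ml c) (substNeg k D (Ml u a))) := by
    rw [← substSkew_substSum, ← cw_mul_mul_eq_substSum k hassoc, substSkew_cw k D _ (hMl.dright c)]
  -- `((c_{-∂-λ} a)_{λ+μ} u) = (c_μ (a_λ u))`
  have hsum : substSum k (cw k (Ml.flip u) (substNeg k D (Ml c a)))
      = swapVar k (cw k (Ml c) (Ml a u)) := by
    rw [substSum_cw_substNeg k D _ (fun x => hMl.dleft x u), ← cw_mul_mul_eq_substSum k hassoc]
  have hlhs : cw k (commBr k D Ml (s₁ * s₂) a) (Ml c u)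
      = cw k (Ml a) (Ml c u) - (s₁ * s₂) • cw k (substNeg k D) (cw k (Ml.flip a) (Ml c u)) := by
    rw [commBr, cw_sub, cw_zsmul, ← cw_comp]
    rfl
  rw [hlhs, hswap, cw_mul_mul_eq_substSum k hassoc, commBr_apply, commBr_apply, map_sub, map_zsmul,
    map_sub, map_zsmul, hsum, map_sub, map_zsmul, map_sub, map_zsmul]
  simp only [smul_sub, smul_smul]
  abel

variable {W : Submodule k M}

lemma mul_coeff_mul_mem {c u b : M} (h : cw k (Ml c) (Ml u b) ∈ coeffSub k (coeffSub k W))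
    (j t : ℕ) : Ml (Ml c u j) b t ∈ W := by
  rw [cw_mul_mul_eq_substSum k hassoc] at h
  simpa only [cw_apply, LinearMap.flip_apply] using mem_coeffSub_of_substSum_mem k h j t

lemma commBr_mul_coeff_mem (hMl : IsSesqui k D D D Ml) {s₁ s₂ : ℤ} {a c u : M}
    (h₁ : cw k (Ml.flip u) (commBr k D Ml s₁ a c) ∈ coeffSub k (coeffSub k W))
    (h₂ : cw k (Ml c) (commBr k D Ml s₂ a u) ∈ coeffSub k (coeffSub k W)) (t : ℕ) :
    commBr k D Ml (s₁ * s₂) a (Ml c u t) ∈ coeffSub k W := by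
  have h : cw k (commBr k D Ml (s₁ * s₂) a) (Ml c u) ∈ coeffSub k (coeffSub k W) := by
    rw [cw_commBr_mul k hassoc hMl]
    exact add_mem (substSum_mem_coeffSub k h₁) (zsmul_mem (swapVar_mem_coeffSub k h₂) s₁)
  simpa only [cw_apply] using h t

end Assoc

end Operators

section Filtration

variable {A : Type} [AddCommGroup A] [Module k A] {D : A →ₗ[k] A}

lemma subset_hSpan {S : Set A} {x : A} (hx : x ∈ S) : x ∈ hSpan k D S :=
  Submodule.subset_span (Set.mem_iUnion.2 ⟨0, x, hx, rfl⟩)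

lemma map_D_mem_hSpan {S : Set A} {x : A} (hx : x ∈ hSpan k D S) : D x ∈ hSpan k D S := by
  induction hx using Submodule.span_induction with
  | mem y hy =>
      obtain ⟨n, z, hz, rfl⟩ := Set.mem_iUnion.1 hy
      refine Submodule.subset_span (Set.mem_iUnion.2 ⟨n + 1, z, hz, ?_⟩)
      rw [pow_succ', Module.End.mul_apply]
  | zero => simp
  | add y z _ _ hy hz => rw [map_add]; exact add_mem hy hz
  | smul c y _ hy => rw [map_smul]; exact Submodule.smul_mem _ c hy

lemma hSpan_le {S : Set A} {W : Submodule k A} (hS : S ⊆ W) (hW : ∀ x ∈ W, D x ∈ W) :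
    hSpan k D S ≤ W := by
  rw [hSpan, Submodule.span_le, Set.iUnion_subset_iff]
  rintro n _ ⟨z, hz, rfl⟩
  exact Module.End.pow_apply_mem_of_forall_mem n hW _ (hS hz)

lemma map_D_mem_sup {U V : Submodule k A} (hU : ∀ x ∈ U, D x ∈ U) (hV : ∀ x ∈ V, D x ∈ V)
    {x : A} (hx : x ∈ U ⊔ V) : D x ∈ U ⊔ V := by
  obtain ⟨y, hy, z, hz, rfl⟩ := Submodule.mem_sup.1 hx
  rw [map_add]
  exact add_mem (Submodule.mem_sup_left (hU y hy)) (Submodule.mem_sup_right (hV z hz))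

section Parity

variable {par : ZMod 2 → Submodule k A}

lemma bilin_mem_sup_of_homogeneous {f : A →ₗ[k] A →ₗ[k] A} {U V : Submodule k A}
    {Z : ZMod 2 → Submodule k A}
    (hf : ∀ α β, ∀ c ∈ U ⊓ par α, ∀ u ∈ V ⊓ par β, f c u ∈ Z (α + β)) {c u : A}
    (hc : c ∈ U ⊓ par 0 ⊔ U ⊓ par 1) (hu : u ∈ V ⊓ par 0 ⊔ V ⊓ par 1) : f c u ∈ Z 0 ⊔ Z 1 := by
  obtain ⟨c₀, hc₀, c₁, hc₁, rfl⟩ := Submodule.mem_sup.1 hc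
  obtain ⟨u₀, hu₀, u₁, hu₁, rfl⟩ := Submodule.mem_sup.1 hu
  simp only [map_add, LinearMap.add_apply]
  exact add_mem (add_mem (Submodule.mem_sup_left (hf 0 0 c₀ hc₀ u₀ hu₀))
    (Submodule.mem_sup_right (hf 1 0 c₁ hc₁ u₀ hu₀)))
    (add_mem (Submodule.mem_sup_right (hf 0 1 c₀ hc₀ u₁ hu₁))
      (Submodule.mem_sup_left (hf 1 1 c₁ hc₁ u₁ hu₁)))

lemma mem_of_mem_sup_of_mem_par (hpar : par 0 ⊓ par 1 = ⊥) {Z : ZMod 2 → Submodule k A}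
    (hZ : ∀ j, Z j ≤ par j) {x : A} (hx : x ∈ Z 0 ⊔ Z 1) {j : ZMod 2} (hj : x ∈ par j) :
    x ∈ Z j := by
  obtain ⟨y, hy, z, hz, rfl⟩ := Submodule.mem_sup.1 hx
  have hzero : ∀ w, w ∈ par 0 → w ∈ par 1 → w = 0 := fun w h₀ h₁ => by
    simpa [← Submodule.mem_bot k, ← hpar] using And.intro h₀ h₁
  rcases (by decide : ∀ j : ZMod 2, j = 0 ∨ j = 1) j with rfl | rfl
  · rw [hzero z (by simpa using sub_mem hj (hZ 0 hy)) (hZ 1 hz), add_zero]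
    exact hy
  · rw [hzero y (hZ 0 hy) (by simpa using sub_mem hj (hZ 1 hz)), zero_add]
    exact hz

end Parity

end Filtration

lemma sgn_add_right (i j₁ j₂ : ZMod 2) : sgn i (j₁ + j₂) = sgn i j₁ * sgn i j₂ := by
  revert i j₁ j₂
  decide

lemma sgn_comm (i j : ZMod 2) : sgn i j = sgn j i := by
  revert i j
  decide

lemma sgn_mul_self (i j : ZMod 2) : sgn i j * sgn i j = 1 := by
  revert i j
  decide

section Envelope

variable {A : Type} [AddCommGroup A] [Module k A] {D : A →ₗ[k] A}
  {Ml : A →ₗ[k] A →ₗ[k] (ℕ →₀ A)} {B : Submodule k A} {par : ZMod 2 → Submodule k A}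
  (hMl : IsSesqui k D D D Ml)
  (hassoc : ∀ a b c, opComp k Ml Ml a b c = opSubst k Ml Ml a b c)
  (hgr : IsGradedHMod k D par)
  (hpar : ∀ i j a b, a ∈ par i → b ∈ par j → ∀ n, Ml a b n ∈ par (i + j))
  (hBD : ∀ x ∈ B, D x ∈ B)
  (hBgr : ∀ a ∈ B, ∃ a0 ∈ B ⊓ par 0, ∃ a1 ∈ B ⊓ par 1, a = a0 + a1)
  (hBcl : ∀ i j, ∀ a ∈ B ⊓ par i, ∀ b ∈ B ⊓ par j, ∀ t,
    (Ml a b - sgn i j • substNeg k D (Ml b a)) t ∈ B)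

lemma filt_succ {n : ℕ} (hn : 1 ≤ n) :
    filt k D Ml B (n + 1) = hSpan k D {x | ∃ b ∈ B, ∃ u ∈ filt k D Ml B n, ∃ j, Ml b u j = x} := by
  obtain ⟨r, rfl⟩ := Nat.exists_eq_add_of_le' hn
  rfl

include hBD in
lemma map_D_mem_filt : ∀ n, ∀ x ∈ filt k D Ml B n, D x ∈ filt k D Ml B n
  | 0, x, hx => by simp_all [filt]
  | 1, x, hx => hBD x hx
  | _ + 2, _, hx => map_D_mem_hSpan k hx

lemma mul_coeff_mem_filt_succ {n : ℕ} (hn : 1 ≤ n) {c u : A} (hc : c ∈ B)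
    (hu : u ∈ filt k D Ml B n) (t : ℕ) : Ml c u t ∈ filt k D Ml B (n + 1) := by
  rw [filt_succ k hn]
  exact subset_hSpan k ⟨c, hc, u, hu, t, rfl⟩

include hMl hassoc in
lemma mul_mem_filt {n m : ℕ} (hn : 1 ≤ n) (hm : 1 ≤ m) {a b : A} (ha : a ∈ filt k D Ml B n)
    (hb : b ∈ filt k D Ml B m) : Ml a b ∈ coeffSub k (filt k D Ml B (n + m)) := by
  induction n, hn using Nat.le_induction generalizing a with
  | base =>
    rw [add_comm]
    exact mul_coeff_mem_filt_succ k hm (show a ∈ B from ha) hb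
  | succ n hn ih =>
    suffices filt k D Ml B (n + 1) ≤
        (coeffSub k (filt k D Ml B (n + 1 + m))).comap (Ml.flip b) from this ha
    rw [filt_succ k hn]
    refine hSpan_le k ?_ fun x hx => ?_
    · rintro _ ⟨c, hc, u, hu, j, rfl⟩ t
      refine mul_coeff_mul_mem k hassoc (fun p t' => ?_) j t
      rw [cw_apply, show n + 1 + m = n + m + 1 by omega]
      exact mul_coeff_mem_filt_succ k (by omega) hc (ih hu p) t'
    · simpa only [Submodule.mem_comap, LinearMap.flip_apply, hMl.dleft] using
        neg_mem (lamMul_mem_coeffSub k hx)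

include hgr hpar hBD hBgr in
lemma filt_le_sup_par {n : ℕ} (hn : 1 ≤ n) :
    filt k D Ml B n ≤ filt k D Ml B n ⊓ par 0 ⊔ filt k D Ml B n ⊓ par 1 := by
  have hD : ∀ n j, ∀ x ∈ filt k D Ml B n ⊓ par j, D x ∈ filt k D Ml B n ⊓ par j :=
    fun n j x hx => ⟨map_D_mem_filt k hBD n x hx.1, hgr.map_d j x hx.2⟩
  have hB : B ≤ B ⊓ par 0 ⊔ B ⊓ par 1 := fun a ha => by
    obtain ⟨a₀, ha₀, a₁, ha₁, rfl⟩ := hBgr a ha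
    exact Submodule.add_mem_sup ha₀ ha₁
  induction n, hn using Nat.le_induction with
  | base => exact hB
  | succ n hn ih =>
    intro x hx
    rw [filt_succ k hn] at hx
    refine hSpan_le k ?_ (fun x => map_D_mem_sup k (hD _ 0) (hD _ 1)) hx
    rintro _ ⟨c, hc, u, hu, t, rfl⟩
    have hgen := bilin_mem_sup_of_homogeneous k (f := Ml.compr₂ (Finsupp.lapply t))
      (Z := fun j => filt k D Ml B (n + 1) ⊓ par j)
      (fun α β c hc u hu => ⟨mul_coeff_mem_filt_succ k hn hc.1 hu.1 t, hpar α β c u hc.2 hu.2 t⟩)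
      (hB hc) (ih hu)
    simpa only [LinearMap.compr₂_apply, Finsupp.lapply_apply, SetLike.mem_coe] using hgen

variable (D Ml B par) in
/-- `[A_n {}_λ A_m] ⊆ A_{n+m-1}[λ]` on homogeneous elements. -/
def CommBrCompat (n m : ℕ) : Prop :=
  ∀ i j, ∀ a ∈ filt k D Ml B n ⊓ par i, ∀ b ∈ filt k D Ml B m ⊓ par j,
    commBr k D Ml (sgn i j) a b ∈ coeffSub k (filt k D Ml B (n + m - 1))

include hBcl in
lemma commBrCompat_one_one : CommBrCompat k D Ml B par 1 1 := fun i j a ha b hb t => by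
  rw [commBr_apply]
  exact hBcl i j a ha b hb t

include hBD in
lemma CommBrCompat.symm {n m : ℕ}
    (h : CommBrCompat k D Ml B par m n) : CommBrCompat k D Ml B par n m := by
  intro i j a ha b hb
  rw [commBr_skew k (sgn_mul_self i j), sgn_comm, add_comm n m]
  exact neg_mem (zsmul_mem (substNeg_mem_coeffSub k (map_D_mem_filt k hBD _)
    (h j i b hb a ha)) _)

include hMl hassoc in
lemma commBr_mul_coeff_mem_filt {n m : ℕ} (hn : 1 ≤ n) (hm : 1 ≤ m)
    (h₁ : CommBrCompat k D Ml B par n 1) (hₘ : CommBrCompat k D Ml B par n m)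
    {i α β : ZMod 2} {a c u : A} (ha : a ∈ filt k D Ml B n ⊓ par i) (hc : c ∈ B ⊓ par α)
    (hu : u ∈ filt k D Ml B m ⊓ par β) (t : ℕ) :
    commBr k D Ml (sgn i (α + β)) a (Ml c u t) ∈ coeffSub k (filt k D Ml B (n + m)) := by
  rw [sgn_add_right]
  refine commBr_mul_coeff_mem k hassoc hMl (fun p t' => ?_) (fun p t' => ?_) t
  · rw [cw_apply, LinearMap.flip_apply]
    exact mul_mem_filt k hMl hassoc hn hm (h₁ i α a ha c hc p) hu.1 t'
  · rw [cw_apply, show n + m = n + m - 1 + 1 by omega]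
    exact mul_coeff_mem_filt_succ k (by omega) hc.1 (hₘ i β a ha u hu p) t'

include hMl hassoc hgr hpar hBD hBgr in
lemma CommBrCompat.succ_right {n m : ℕ} (hn : 1 ≤ n) (hm : 1 ≤ m)
    (hₘ : CommBrCompat k D Ml B par n m) (h₁ : CommBrCompat k D Ml B par n 1) :
    CommBrCompat k D Ml B par n (m + 1) := by
  intro i j a ha b hb
  rw [show n + (m + 1) - 1 = n + m by omega]
  let Z : ZMod 2 → Submodule k A := fun j =>
    par j ⊓ (coeffSub k (filt k D Ml B (n + m))).comap (commBr k D Ml (sgn i j) a)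
  have hZ : ∀ j, ∀ x ∈ Z j, D x ∈ Z j := fun j x hx => by
    refine ⟨hgr.map_d j x hx.1, ?_⟩
    rw [SetLike.mem_coe, Submodule.mem_comap, commBr_map_D_right k hMl]
    exact add_mem (cw_mem_coeffSub k (map_D_mem_filt k hBD _) hx.2) (lamMul_mem_coeffSub k hx.2)
  suffices hb' : b ∈ Z 0 ⊔ Z 1 from
    (mem_of_mem_sup_of_mem_par k hgr.inf_eq_bot (Z := Z) (fun _ => inf_le_left) hb' hb.2).2
  have hb₁ := hb.1
  rw [filt_succ k hm] at hb₁
  refine hSpan_le k ?_ (fun x => map_D_mem_sup k (hZ 0) (hZ 1)) hb₁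
  rintro _ ⟨c, hc, u, hu, t, rfl⟩
  have hgen := bilin_mem_sup_of_homogeneous k (f := Ml.compr₂ (Finsupp.lapply t)) (Z := Z)
    (fun α β c hc u hu => ⟨hpar α β c u hc.2 hu.2 t,
      commBr_mul_coeff_mem_filt k hMl hassoc hn hm h₁ hₘ ha hc hu t⟩)
    (filt_le_sup_par k hgr hpar hBD hBgr le_rfl hc) (filt_le_sup_par k hgr hpar hBD hBgr hm hu)
  simpa only [LinearMap.compr₂_apply, Finsupp.lapply_apply, SetLike.mem_coe] using hgen

include hMl hassoc hgr hpar hBD hBgr hBcl in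
lemma commBrCompat_of_one_le {n m : ℕ} (hn : 1 ≤ n) (hm : 1 ≤ m) :
    CommBrCompat k D Ml B par n m := by
  have h₁₁ := commBrCompat_one_one k hBcl
  have h_one_left : ∀ m, 1 ≤ m → CommBrCompat k D Ml B par 1 m := fun m hm => by
    induction m, hm using Nat.le_induction with
    | base => exact h₁₁
    | succ m hm ih => exact ih.succ_right k hMl hassoc hgr hpar hBD hBgr le_rfl hm h₁₁
  have h_one_right := (h_one_left n hn).symm k hBD
  induction m, hm using Nat.le_induction with
  | base => exact h_one_right
  | succ m hm ih => exact ih.succ_right k hMl hassoc hgr hpar hBD hBgr hn hm h_one_right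

end Envelope

variable [CharZero k]

theorem envelope_filtration
    (A : Type) [AddCommGroup A] [Module k A]
    (D : A →ₗ[k] A) (par : ZMod 2 → Submodule k A) (Ml : A →ₗ[k] A →ₗ[k] (ℕ →₀ A))
    (hgr : IsGradedHMod k D par)
    (hsesq : IsSesqui k D D D Ml)
    (hpar : ∀ i j a b, a ∈ par i → b ∈ par j → ∀ n, Ml a b n ∈ par (i + j))
    (hassoc : ∀ a b c, opComp k Ml Ml a b c = opSubst k Ml Ml a b c)
    (B : Submodule k A) (hBD : ∀ x ∈ B, D x ∈ B)
    (hBgr : ∀ a ∈ B, ∃ a0 ∈ B ⊓ par 0, ∃ a1 ∈ B ⊓ par 1, a = a0 + a1)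
    (hBcl : ∀ i j, ∀ a ∈ B ⊓ par i, ∀ b ∈ B ⊓ par j, ∀ t,
      (Ml a b - sgn i j • substNeg k D (Ml b a)) t ∈ B) :
    ∀ n m : ℕ, 1 ≤ n → 1 ≤ m →
      (∀ a ∈ filt k D Ml B n, ∀ b ∈ filt k D Ml B m, ∀ t,
        Ml a b t ∈ filt k D Ml B (n + m)) ∧
      (∀ i j, ∀ a ∈ filt k D Ml B n ⊓ par i, ∀ b ∈ filt k D Ml B m ⊓ par j, ∀ t,
        (Ml a b - sgn i j • substNeg k D (Ml b a)) t ∈ filt k D Ml B (n + m - 1)) := by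
  intro n m hn hm
  refine ⟨fun a ha b hb => mul_mem_filt k hsesq hassoc hn hm ha hb, fun i j a ha b hb t => ?_⟩
  simpa only [commBr_apply] using
    commBrCompat_of_one_le k hsesq hassoc hgr hpar hBD hBgr hBcl hn hm i j a ha b hb t
end

section
/- Let p be a Poisson superalgebra with even derivation d carrying in addition a ℤ-grading p = ⊕_{n∈ℤ} p_n (compatible with the ℤ₂-grading) such that p_n p_m ⊆ p_{n+m}, {p_n, p_m} ⊆ p_{n+m+1}, and d(p_n) ⊆ p_{n+1}. For a ∈ p_{−1} and u ∈ p_n, the element ρ̂_λ(a, u) = {a, u} + ∂ d(a)u + λ(d(au) + au) of (H ⊗ p)[λ] has all coefficients in H ⊗ (p_n ⊕ p_{n−1}); consequently, for every m ∈ ℤ, the H-submodule M_{≤m} = H ⊗ (⊕_{n≤m} p_n) of L(p, d) is invariant under ρ̂_λ(a, ·) for every a ∈ p_{−1}. -/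
open Finsupp

noncomputable section

variable (k : Type) [Field k] [CharZero k]

/-! The weight bookkeeping is one line: for `a ∈ p_{-1}` and `u ∈ p_n` the elements `{a, u}`,
`d(a) u` and `d(a u)` have weight `n` while `a u` has weight `n - 1`. Everything else is
`H`-linearity: `∂` and multiplication by `λ` act on `(H ⊗ p)[λ]` coefficientwise, and by
sesqui-linearity `ρ̂_λ(a, ∂^j u) = (∂ + λ)^j ρ̂_λ(a, u)`, so the invariance of `M_{≤m}` reduces
to the generators `u ∈ p_n`, `n ≤ m`. -/

section Coeffwise

variable {K M N : Type} [Field K] [AddCommGroup M] [Module K M] [AddCommGroup N] [Module K N]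

/-- For `S ≤ M`, `coeffwise (coeffwise S)` is `(H ⊗ S)[λ]` inside `(H ⊗ M)[λ] = ℕ →₀ (ℕ →₀ M)`. -/
def coeffwise (S : Submodule K M) : Submodule K (ℕ →₀ M) :=
  ⨅ n : ℕ, S.comap (Finsupp.lapply n)

@[simp]
lemma mem_coeffwise {S : Submodule K M} {f : ℕ →₀ M} : f ∈ coeffwise S ↔ ∀ n, f n ∈ S := by
  simp [coeffwise]

lemma coeffwise_mono {S T : Submodule K M} (h : S ≤ T) : coeffwise S ≤ coeffwise T :=
  fun _ hf => mem_coeffwise.2 fun n => h (mem_coeffwise.1 hf n)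

lemma single_mem_coeffwise {S : Submodule K M} {x : M} (hx : x ∈ S) (n : ℕ) :
    Finsupp.single n x ∈ coeffwise S :=
  mem_coeffwise.2 fun m => by
    rcases eq_or_ne n m with rfl | h
    · simpa using hx
    · simp [Finsupp.single_eq_of_ne' h]

lemma mapDomain_mem_coeffwise {S : Submodule K M} (f : ℕ → ℕ) {v : ℕ →₀ M}
    (hv : v ∈ coeffwise S) : Finsupp.mapDomain f v ∈ coeffwise S :=
  Submodule.finsuppSum_mem _ _ _ _ fun n _ => single_mem_coeffwise (mem_coeffwise.1 hv n) _

lemma lamMul_mem_coeffwise {S : Submodule K M} {v : ℕ →₀ M} (hv : v ∈ coeffwise S) :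
    lamMul K v ∈ coeffwise S :=
  mapDomain_mem_coeffwise _ hv

lemma DD_mem_coeffwise {S : Submodule K M} {v : ℕ →₀ M} (hv : v ∈ coeffwise S) :
    DD K M v ∈ coeffwise S :=
  mapDomain_mem_coeffwise _ hv

lemma cw_mem_coeffwise {S : Submodule K M} {T : Submodule K N} {f : M →ₗ[K] N}
    (hf : ∀ x ∈ S, f x ∈ T) {v : ℕ →₀ M} (hv : v ∈ coeffwise S) : cw K f v ∈ coeffwise T :=
  mem_coeffwise.2 fun n => by simpa [cw] using hf _ (mem_coeffwise.1 hv n)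

lemma pow_cw_DD_add_lamMul_mem_coeffwise {S : Submodule K M} (j : ℕ) {g : ℕ →₀ (ℕ →₀ M)}
    (hg : g ∈ coeffwise (coeffwise S)) :
    ((cw K (DD K M) + lamMul K : Module.End K _) ^ j) g ∈ coeffwise (coeffwise S) :=
  Module.End.pow_apply_mem_of_forall_mem j
    (fun _ hx => add_mem (cw_mem_coeffwise (fun _ => DD_mem_coeffwise) hx)
      (lamMul_mem_coeffwise hx)) g hg

lemma lamMul_cw (f : M →ₗ[K] N) (v : ℕ →₀ M) : lamMul K (cw K f v) = cw K f (lamMul K v) :=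
  Finsupp.mapDomain_mapRange _ _ _ (map_zero f) (map_add f)

lemma commute_lamMul_pow_cw_DD_add_lamMul (j : ℕ) :
    Commute (lamMul K) ((cw K (DD K M) + lamMul K : Module.End K (ℕ →₀ (ℕ →₀ M))) ^ j) :=
  have hcw : Commute (lamMul K) (cw K (DD K M)) := LinearMap.ext (lamMul_cw _)
  (hcw.add_right (Commute.refl _)).pow_right j

end Coeffwise

section Twisted

variable {K p : Type} [Field K] [NonUnitalRing p] [Module K p] [SMulCommClass K p p]
  [IsScalarTower K p p] (br : p →ₗ[K] p →ₗ[K] p) (d : p →ₗ[K] p)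

lemma extSesqui_emb_single {A B W : Type} [AddCommGroup A] [Module K A]
    [AddCommGroup B] [Module K B] [AddCommGroup W] [Module K W]
    (DW : W →ₗ[K] W) (F : A →ₗ[K] B →ₗ[K] (ℕ →₀ W)) (a : A) (j : ℕ) (b : B) :
    extSesqui K DW F (emb K A a) (Finsupp.single j b)
      = ((cw K DW + lamMul K : Module.End K _) ^ j) (F a b) := by
  simp [extSesqui, emb]

lemma LpdRho_emb_emb (a b : p) :
    LpdRho K p br d (emb K p a) (emb K p b)
      = cst K (emb K p (br a b) + DD K p (emb K p (d a * b)))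
        + lamMul K (cst K (emb K p (d (a * b) + a * b))) := by
  rw [show emb K p b = Finsupp.single 0 b from rfl]
  simp [LpdRho, LpdBr, LpdMul, extSesqui_emb_single, qua0, curMul0, add_assoc]

lemma LpdRho_emb_single (a u : p) (j : ℕ) :
    LpdRho K p br d (emb K p a) (Finsupp.single j u)
      = ((cw K (DD K p) + lamMul K : Module.End K _) ^ j)
          (LpdRho K p br d (emb K p a) (emb K p u)) := by
  rw [show emb K p u = Finsupp.single 0 u from rfl]
  simp only [LpdRho, LpdBr, LpdMul, LinearMap.add_apply, LinearMap.compr₂_apply,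
    extSesqui_emb_single, pow_zero, Module.End.one_apply, map_add]
  rw [← Module.End.mul_apply, (commute_lamMul_pow_cw_DD_add_lamMul j).eq, Module.End.mul_apply]

lemma LpdRho_emb_mem_coeffwise {S T : Submodule K p} (a : p)
    (hT : T ≤ (coeffwise (coeffwise S)).comap ((LpdRho K p br d (emb K p a)).comp (emb K p)))
    {f : ℕ →₀ p} (hf : f ∈ coeffwise T) :
    LpdRho K p br d (emb K p a) f ∈ coeffwise (coeffwise S) := by
  rw [← f.sum_single, Finsupp.sum, map_sum]
  exact Submodule.sum_mem _ fun j _ => by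
    rw [LpdRho_emb_single]
    exact pow_cw_DD_add_lamMul_mem_coeffwise j (hT (mem_coeffwise.1 hf j))

end Twisted

lemma LpdRho_emb_emb_mem_of_weight {K p : Type} [Field K] [NonUnitalRing p] [Module K p]
    [SMulCommClass K p p] [IsScalarTower K p p] {br : p →ₗ[K] p →ₗ[K] p} {d : p →ₗ[K] p}
    {gr : ℤ → Submodule K p}
    (hgr_mul : ∀ (n m : ℤ) (a b : p), a ∈ gr n → b ∈ gr m → a * b ∈ gr (n + m))
    (hgr_br : ∀ (n m : ℤ) (a b : p), a ∈ gr n → b ∈ gr m → br a b ∈ gr (n + m + 1))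
    (hgr_d : ∀ (n : ℤ) (a : p), a ∈ gr n → d a ∈ gr (n + 1))
    {n : ℤ} {a u : p} (ha : a ∈ gr (-1)) (hu : u ∈ gr n) :
    LpdRho K p br d (emb K p a) (emb K p u) ∈ coeffwise (coeffwise (gr n ⊔ gr (n - 1))) := by
  have hau : a * u ∈ gr (n - 1) := by convert hgr_mul _ _ _ _ ha hu using 2; ring
  have hbr : br a u ∈ gr n := by convert hgr_br _ _ _ _ ha hu using 2; ring
  have hdau : d a * u ∈ gr n := by convert hgr_mul _ _ _ _ (hgr_d _ _ ha) hu using 2; ring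
  have hdmul : d (a * u) ∈ gr n := by convert hgr_d _ _ hau using 2; ring
  rw [LpdRho_emb_emb]
  exact add_mem
    (single_mem_coeffwise (add_mem (single_mem_coeffwise (Submodule.mem_sup_left hbr) _)
      (DD_mem_coeffwise (single_mem_coeffwise (Submodule.mem_sup_left hdau) _))) _)
    (lamMul_mem_coeffwise (single_mem_coeffwise (single_mem_coeffwise
      (add_mem (Submodule.mem_sup_left hdmul) (Submodule.mem_sup_right hau)) _) _))

theorem twisted_representation_weight_filtration
    (p : Type) [NonUnitalRing p] [Module k p] [SMulCommClass k p p] [IsScalarTower k p p]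
    (br : p →ₗ[k] p →ₗ[k] p) (d : p →ₗ[k] p)
    (gr : ℤ → Submodule k p)
    (hgr_mul : ∀ (n m : ℤ) (a b : p), a ∈ gr n → b ∈ gr m → a * b ∈ gr (n + m))
    (hgr_br : ∀ (n m : ℤ) (a b : p), a ∈ gr n → b ∈ gr m → br a b ∈ gr (n + m + 1))
    (hgr_d : ∀ (n : ℤ) (a : p), a ∈ gr n → d a ∈ gr (n + 1)) :
    (∀ (n : ℤ) (a u : p), a ∈ gr (-1) → u ∈ gr n →
      ∀ t j, ((cst k (emb k p (br a u) + DD k p (emb k p (d a * u)))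
          + lamMul k (cst k (emb k p (d (a * u) + a * u)))) t) j ∈ gr n ⊔ gr (n - 1)) ∧
    (∀ (m : ℤ) (a : p), a ∈ gr (-1) → ∀ f : ℕ →₀ p,
      (∀ j, f j ∈ ⨆ n : ℤ, ⨆ _ : n ≤ m, gr n) →
      ∀ t j, (LpdRho k p br d (emb k p a) f t) j ∈ ⨆ n : ℤ, ⨆ _ : n ≤ m, gr n) := by
  have hgen {n : ℤ} {a u : p} (ha : a ∈ gr (-1)) (hu : u ∈ gr n) :=
    LpdRho_emb_emb_mem_of_weight hgr_mul hgr_br hgr_d ha hu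
  refine ⟨fun n a u ha hu t j => ?_, fun m a ha f hf t j => ?_⟩
  · rw [← LpdRho_emb_emb]
    exact mem_coeffwise.1 (mem_coeffwise.1 (hgen ha hu) t) j
  · have hgens : (⨆ n : ℤ, ⨆ _ : n ≤ m, gr n) ≤ (coeffwise (coeffwise _)).comap
        ((LpdRho k p br d (emb k p a)).comp (emb k p)) :=
      iSup₂_le fun n hn _ hu => coeffwise_mono (coeffwise_mono
        (sup_le (le_iSup₂ (f := fun n (_ : n ≤ m) => gr n) n hn)
          (le_iSup₂ (f := fun n (_ : n ≤ m) => gr n) (n - 1) (by omega)))) (hgen ha hu)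
    exact mem_coeffwise.1 (mem_coeffwise.1
      (LpdRho_emb_mem_coeffwise br d a hgens (mem_coeffwise.2 hf)) t) j
end
end

section
/- Let p be a Poisson superalgebra with even derivation d carrying in addition a ℤ-grading p = ⊕_{n∈ℤ} p_n (compatible with the ℤ₂-grading) such that p_n p_m ⊆ p_{n+m}, {p_n, p_m} ⊆ p_{n+m+1}, and d(p_n) ⊆ p_{n+1}. Set N = {u ∈ p₀ : au = 0 for all a ∈ p_{−1}}. Then for every a ∈ p_{−1} and u ∈ N, both {a, u} ∈ N and d(a)·u ∈ N. -/
open Finsupp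

noncomputable section

variable (k : Type) [Field k] [CharZero k]

/-! For `a, x ∈ p₋₁` and `u ∈ N`, the Leibniz rule expands `0 = {a, x u}` into
`{a, x} u ± x {a, u}`; since `{a, x} ∈ p₋₁` the first term vanishes, so `x {a, u} = 0`.
The claim for `d(a) u` is associativity, as `d(a) ∈ p₀` and `p₋₁ p₀ ⊆ p₋₁`. -/

lemma sgn_smul_eq_zero_iff {M : Type*} [AddCommGroup M] {i j : ZMod 2} {y : M} :
    sgn i j • y = 0 ↔ y = 0 := by
  unfold sgn
  split_ifs <;> simp

section Annihilator

variable {p : Type}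

def rightAnnihilator [MulZeroClass p] (S : Set p) : Set p := {u | ∀ x ∈ S, x * u = 0}

lemma mem_rightAnnihilator [MulZeroClass p] {S : Set p} {u : p} :
    u ∈ rightAnnihilator S ↔ ∀ x ∈ S, x * u = 0 :=
  Iff.rfl

lemma mul_mem_rightAnnihilator [SemigroupWithZero p] {S : Set p} {c u : p}
    (hc : ∀ x ∈ S, x * c ∈ S) (hu : u ∈ rightAnnihilator S) : c * u ∈ rightAnnihilator S :=
  fun x hx => by
    rw [← mul_assoc]
    exact hu _ (hc x hx)

lemma eq_zero_of_forall_homogeneous {R V M : Type*} [Semiring R] [AddCommMonoid V] [Module R V]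
    [AddCommMonoid M] {par : ZMod 2 → Submodule R V} {S T : Submodule R V}
    (hS : S = (S ⊓ par 0) ⊔ (S ⊓ par 1)) (hT : T = (T ⊓ par 0) ⊔ (T ⊓ par 1))
    (B : V →+ V →+ M) (h : ∀ i j, ∀ a ∈ S ⊓ par i, ∀ x ∈ T ⊓ par j, B a x = 0)
    {a x : V} (ha : a ∈ S) (hx : x ∈ T) : B a x = 0 := by
  rw [hS, Submodule.mem_sup] at ha
  rw [hT, Submodule.mem_sup] at hx
  obtain ⟨a₀, ha₀, a₁, ha₁, rfl⟩ := ha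
  obtain ⟨x₀, hx₀, x₁, hx₁, rfl⟩ := hx
  simp only [map_add, AddMonoidHom.add_apply, h 0 0 a₀ ha₀ x₀ hx₀, h 0 1 a₀ ha₀ x₁ hx₁,
    h 1 0 a₁ ha₁ x₀ hx₀, h 1 1 a₁ ha₁ x₁ hx₁, add_zero]

variable {K : Type} [Field K] [NonUnitalRing p] [Module K p]
  {par : ZMod 2 → Submodule K p} {br : p →ₗ[K] p →ₗ[K] p}

lemma IsPoissonSuper.mul_br_eq_zero (hp : IsPoissonSuper K p par br) {i j : ZMod 2}
    {a x u : p} (ha : a ∈ par i) (hx : x ∈ par j) (hxu : x * u = 0) (hax : br a x * u = 0) :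
    x * br a u = 0 := by
  have h := hp.leibniz i j a x u ha hx
  rw [hxu, map_zero, hax, zero_add] at h
  exact sgn_smul_eq_zero_iff.mp h.symm

lemma IsPoissonSuper.br_mem_rightAnnihilator (hp : IsPoissonSuper K p par br)
    {S : Submodule K p} (hS : S = (S ⊓ par 0) ⊔ (S ⊓ par 1))
    (hbr : ∀ a ∈ S, ∀ x ∈ S, br a x ∈ S) {a u : p} (ha : a ∈ S)
    (hu : u ∈ rightAnnihilator (S : Set p)) : br a u ∈ rightAnnihilator (S : Set p) :=
  fun _ hx => eq_zero_of_forall_homogeneous hS hS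
    (AddMonoidHom.mul.flip.comp (br.flip u).toAddMonoidHom)
    (fun _ _ b hb y hy => hp.mul_br_eq_zero hb.2 hy.2 (hu y hy.1) (hu _ (hbr b hb.1 y hy.1)))
    ha hx

end Annihilator

theorem annihilator_invariance
    (p : Type) [NonUnitalRing p] [Module k p]
    (par : ZMod 2 → Submodule k p) (br : p →ₗ[k] p →ₗ[k] p) (d : p →ₗ[k] p)
    (hp : IsPoissonSuper k p par br)
    (gr : ℤ → Submodule k p)
    (hgr_compat : ∀ n : ℤ, gr n = (gr n ⊓ par 0) ⊔ (gr n ⊓ par 1))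
    (hgr_mul : ∀ (n m : ℤ) (a b : p), a ∈ gr n → b ∈ gr m → a * b ∈ gr (n + m))
    (hgr_br : ∀ (n m : ℤ) (a b : p), a ∈ gr n → b ∈ gr m → br a b ∈ gr (n + m + 1))
    (hgr_d : ∀ (n : ℤ) (a : p), a ∈ gr n → d a ∈ gr (n + 1)) :
    ∀ a ∈ gr (-1), ∀ u ∈ gr 0, (∀ x ∈ gr (-1), x * u = 0) →
      (br a u ∈ gr 0 ∧ ∀ x ∈ gr (-1), x * br a u = 0) ∧
      (d a * u ∈ gr 0 ∧ ∀ x ∈ gr (-1), x * (d a * u) = 0) := by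
  intro a ha u hu hann
  have hda : d a ∈ gr 0 := by simpa using hgr_d (-1) a ha
  have hu_ann : u ∈ rightAnnihilator (gr (-1) : Set p) := mem_rightAnnihilator.mpr hann
  refine ⟨⟨by simpa using hgr_br (-1) 0 a u ha hu, ?_⟩, by simpa using hgr_mul 0 0 _ _ hda hu, ?_⟩
  · exact mem_rightAnnihilator.mp <| hp.br_mem_rightAnnihilator (hgr_compat (-1))
      (fun b hb x hx => by simpa using hgr_br (-1) (-1) b x hb hx) ha hu_ann
  · exact mem_rightAnnihilator.mp <|
      mul_mem_rightAnnihilator (fun x hx => by simpa using hgr_mul (-1) 0 x _ hx hda) hu_ann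
end
end
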